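/- arXiv:1207.2346 — 2 statements merged into one kernel-verified Lean document; each statement's English description precedes it below -/
import Mathlib

section
/- Let (f,g,φ) be a chain contraction of (C,∂) to (C',∂') over ℤ/2, and let Δ: C → C⊗C be a chain map that is homotopy coassociative, i.e., there exists a degree +1 map h: C → C^{⊗3} with ∂^⊗ h + h∂ = (Δ⊗1)Δ + (1⊗Δ)Δ. Then the induced coproduct Δ' = (f⊗f)Δg is homotopy coassociative; in fact f^{⊗3}∘[h + (Δφ⊗1 + 1⊗Δφ)∘Δ]∘g is a chain homotopy from (Δ'⊗1)Δ' to (1⊗Δ')Δ'. -/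
open TensorProduct

private lemma char2_add_self {M : Type*} [AddCommGroup M] [Module (ZMod 2) M] (x : M) :
    x + x = 0 := by
  rw [← two_smul (ZMod 2) x, show (2 : ZMod 2) = 0 from rfl, zero_smul]

private lemma char2_nsmul {M : Type*} [AddCommGroup M] [Module (ZMod 2) M] (x : M) :
    (2 : ℕ) • x = 0 := by rw [two_nsmul]; exact char2_add_self x

private lemma char2_zsmul {M : Type*} [AddCommGroup M] [Module (ZMod 2) M] (x : M) :
    (2 : ℤ) • x = 0 := by rw [two_zsmul]; exact char2_add_self x



/-- if (f,g,φ) is a chain contraction of (C,∂) to (C',∂') over ℤ/2 and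
Δ : C → C⊗C is a homotopy coassociative chain map, with homotopy h satisfying
∂^⊗ h + h∂ = (Δ⊗1)Δ + (1⊗Δ)Δ (triple tensors associated into C⊗(C⊗C) via the
associator α), then Δ' = (f⊗f)Δg is homotopy coassociative; in fact
f^{⊗3}∘[h + (Δφ⊗1 + 1⊗Δφ)∘Δ]∘g is a chain homotopy from (Δ'⊗1)Δ' to (1⊗Δ')Δ'. -/
theorem stmt6
    {C C' : Type*}
    [AddCommGroup C] [Module (ZMod 2) C]
    [AddCommGroup C'] [Module (ZMod 2) C']
    (d : C →ₗ[ZMod 2] C) (d' : C' →ₗ[ZMod 2] C')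
    (hdd : d.comp d = 0) (hdd' : d'.comp d' = 0)
    (f : C →ₗ[ZMod 2] C') (g : C' →ₗ[ZMod 2] C)
    (hf : d'.comp f = f.comp d) (hg : d.comp g = g.comp d')
    (φ : C →ₗ[ZMod 2] C)
    (hfg : f.comp g = LinearMap.id)
    (hφ : d.comp φ + φ.comp d = LinearMap.id + g.comp f)
    (Δ : C →ₗ[ZMod 2] C ⊗[ZMod 2] C)
    (hΔ : (TensorProduct.map d LinearMap.id + TensorProduct.map LinearMap.id d).comp Δ
        = Δ.comp d)
    (h : C →ₗ[ZMod 2] C ⊗[ZMod 2] (C ⊗[ZMod 2] C))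
    (hca : (TensorProduct.map d LinearMap.id
             + TensorProduct.map LinearMap.id
                 (TensorProduct.map d LinearMap.id
                   + TensorProduct.map LinearMap.id d)).comp h
          + h.comp d
        = (TensorProduct.assoc (ZMod 2) C C C).toLinearMap.comp
            ((TensorProduct.map Δ LinearMap.id).comp Δ)
          + (TensorProduct.map LinearMap.id Δ).comp Δ) :
    (TensorProduct.map d' LinearMap.id
       + TensorProduct.map LinearMap.id
           (TensorProduct.map d' LinearMap.id
             + TensorProduct.map LinearMap.id d')).comp
        ((TensorProduct.map f (TensorProduct.map f f)).comp
          ((h + ((TensorProduct.assoc (ZMod 2) C C C).toLinearMap.comp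
                    (TensorProduct.map (Δ.comp φ) LinearMap.id)
                  + TensorProduct.map LinearMap.id (Δ.comp φ)).comp Δ).comp g))
      + ((TensorProduct.map f (TensorProduct.map f f)).comp
          ((h + ((TensorProduct.assoc (ZMod 2) C C C).toLinearMap.comp
                    (TensorProduct.map (Δ.comp φ) LinearMap.id)
                  + TensorProduct.map LinearMap.id (Δ.comp φ)).comp Δ).comp g)).comp d'
    = (TensorProduct.assoc (ZMod 2) C' C' C').toLinearMap.comp
        ((TensorProduct.map ((TensorProduct.map f f).comp (Δ.comp g)) LinearMap.id).comp
          ((TensorProduct.map f f).comp (Δ.comp g)))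
      + (TensorProduct.map LinearMap.id ((TensorProduct.map f f).comp (Δ.comp g))).comp
          ((TensorProduct.map f f).comp (Δ.comp g)) := by
  set D2 : C ⊗[ZMod 2] C →ₗ[ZMod 2] C ⊗[ZMod 2] C :=
    TensorProduct.map d LinearMap.id + TensorProduct.map LinearMap.id d with hD2
  set D2' : C' ⊗[ZMod 2] C' →ₗ[ZMod 2] C' ⊗[ZMod 2] C' :=
    TensorProduct.map d' LinearMap.id + TensorProduct.map LinearMap.id d' with hD2'
  set D3 : C ⊗[ZMod 2] (C ⊗[ZMod 2] C) →ₗ[ZMod 2] C ⊗[ZMod 2] (C ⊗[ZMod 2] C) :=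
    TensorProduct.map d LinearMap.id + TensorProduct.map LinearMap.id D2 with hD3
  set D3' : C' ⊗[ZMod 2] (C' ⊗[ZMod 2] C') →ₗ[ZMod 2] C' ⊗[ZMod 2] (C' ⊗[ZMod 2] C') :=
    TensorProduct.map d' LinearMap.id + TensorProduct.map LinearMap.id D2' with hD3'
  set α : (C ⊗[ZMod 2] C) ⊗[ZMod 2] C →ₗ[ZMod 2] C ⊗[ZMod 2] (C ⊗[ZMod 2] C) :=
    (TensorProduct.assoc (ZMod 2) C C C).toLinearMap with hα
  set α' : (C' ⊗[ZMod 2] C') ⊗[ZMod 2] C' →ₗ[ZMod 2] C' ⊗[ZMod 2] (C' ⊗[ZMod 2] C') :=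
    (TensorProduct.assoc (ZMod 2) C' C' C').toLinearMap with hα'
  set F : C ⊗[ZMod 2] (C ⊗[ZMod 2] C) →ₗ[ZMod 2] C' ⊗[ZMod 2] (C' ⊗[ZMod 2] C') :=
    TensorProduct.map f (TensorProduct.map f f) with hF
  set Δφ : C →ₗ[ZMod 2] C ⊗[ZMod 2] C := Δ.comp φ with hΔφ
  set A : C ⊗[ZMod 2] C →ₗ[ZMod 2] C ⊗[ZMod 2] (C ⊗[ZMod 2] C) :=
    α.comp (TensorProduct.map Δφ LinearMap.id) + TensorProduct.map LinearMap.id Δφ with hA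
  set K : C →ₗ[ZMod 2] C ⊗[ZMod 2] (C ⊗[ZMod 2] C) := A.comp Δ with hKdef
  set Δ' : C' →ₗ[ZMod 2] C' ⊗[ZMod 2] C' := (TensorProduct.map f f).comp (Δ.comp g) with hΔ'
  clear_value D2 D2' D3 D3' α α' F Δφ A K Δ'
  -- chain map property of F = f ⊗ f ⊗ f
  have hcomm : D3'.comp F = F.comp D3 := by
    simp only [hD3, hD3', hD2, hD2', hF, LinearMap.add_comp, LinearMap.comp_add,
      ← TensorProduct.map_comp, hf, LinearMap.comp_id, LinearMap.id_comp]
  -- homotopy formula for Δ∘φ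
  have hB : D2.comp Δφ + Δφ.comp d = Δ + Δ.comp (g.comp f) := by
    rw [hΔφ, ← LinearMap.comp_assoc, hΔ, LinearMap.comp_assoc, LinearMap.comp_assoc,
      ← LinearMap.comp_add, hφ, LinearMap.comp_add, LinearMap.comp_id]
  -- naturality of the associator against the differential
  have hnat : D3.comp α
      = α.comp (TensorProduct.map D2 LinearMap.id + TensorProduct.map LinearMap.id d) := by
    rw [hD3, hD2]
    simp only [LinearMap.add_comp, LinearMap.comp_add, TensorProduct.map_add_left,
      TensorProduct.map_add_right, LinearMap.add_comp, LinearMap.comp_add]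
    have e1 : (TensorProduct.map d (LinearMap.id : C ⊗[ZMod 2] C →ₗ[ZMod 2] C ⊗[ZMod 2] C)).comp α
        = α.comp (TensorProduct.map (TensorProduct.map d LinearMap.id) LinearMap.id) := by
      rw [hα, show (LinearMap.id : C ⊗[ZMod 2] C →ₗ[ZMod 2] C ⊗[ZMod 2] C)
            = TensorProduct.map LinearMap.id LinearMap.id from (TensorProduct.map_id).symm,
        TensorProduct.map_map_comp_assoc_eq]
    have e2 : (TensorProduct.map (LinearMap.id : C →ₗ[ZMod 2] C)
          (TensorProduct.map d LinearMap.id)).comp α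
        = α.comp (TensorProduct.map (TensorProduct.map LinearMap.id d) LinearMap.id) := by
      rw [hα, TensorProduct.map_map_comp_assoc_eq]
    have e3 : (TensorProduct.map (LinearMap.id : C →ₗ[ZMod 2] C)
          (TensorProduct.map LinearMap.id d)).comp α
        = α.comp (TensorProduct.map (TensorProduct.map LinearMap.id LinearMap.id) d) := by
      rw [hα, TensorProduct.map_map_comp_assoc_eq]
    rw [e1, e2, e3, TensorProduct.map_id]
    abel
  -- the key homotopy computation for A
  have hAA : D3.comp A + A.comp D2
      = α.comp (TensorProduct.map (Δ + Δ.comp (g.comp f)) LinearMap.id)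
        + TensorProduct.map LinearMap.id (Δ + Δ.comp (g.comp f)) := by
    have t1 : D3.comp (α.comp (TensorProduct.map Δφ LinearMap.id))
        = α.comp (TensorProduct.map (D2.comp Δφ) LinearMap.id
            + TensorProduct.map Δφ d) := by
      rw [← LinearMap.comp_assoc, hnat, LinearMap.comp_assoc]
      congr 1
      simp only [LinearMap.add_comp, ← TensorProduct.map_comp, LinearMap.comp_id,
        LinearMap.id_comp]
    have t2 : D3.comp (TensorProduct.map LinearMap.id Δφ)
        = TensorProduct.map d Δφ + TensorProduct.map LinearMap.id (D2.comp Δφ) := by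
      rw [hD3]
      simp only [LinearMap.add_comp, ← TensorProduct.map_comp, LinearMap.comp_id,
        LinearMap.id_comp]
    have t3 : (α.comp (TensorProduct.map Δφ LinearMap.id)).comp D2
        = α.comp (TensorProduct.map (Δφ.comp d) LinearMap.id
            + TensorProduct.map Δφ d) := by
      rw [LinearMap.comp_assoc]
      congr 1
      rw [hD2]
      simp only [LinearMap.comp_add, ← TensorProduct.map_comp, LinearMap.comp_id,
        LinearMap.id_comp]
    have t4 : (TensorProduct.map LinearMap.id Δφ).comp D2
        = TensorProduct.map d Δφ + TensorProduct.map LinearMap.id (Δφ.comp d) := by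
      rw [hD2]
      simp only [LinearMap.comp_add, ← TensorProduct.map_comp, LinearMap.comp_id,
        LinearMap.id_comp]
    rw [hA, LinearMap.comp_add, LinearMap.add_comp, t1, t2, t3, t4]
    have e : α.comp (TensorProduct.map (D2.comp Δφ) LinearMap.id + TensorProduct.map Δφ d)
          + (TensorProduct.map d Δφ + TensorProduct.map LinearMap.id (D2.comp Δφ))
          + (α.comp (TensorProduct.map (Δφ.comp d) LinearMap.id + TensorProduct.map Δφ d)
              + (TensorProduct.map d Δφ + TensorProduct.map LinearMap.id (Δφ.comp d)))
        = α.comp (TensorProduct.map (D2.comp Δφ) LinearMap.id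
              + TensorProduct.map (Δφ.comp d) LinearMap.id)
          + (TensorProduct.map LinearMap.id (D2.comp Δφ)
              + TensorProduct.map LinearMap.id (Δφ.comp d))
          + (α.comp (TensorProduct.map Δφ d) + α.comp (TensorProduct.map Δφ d))
          + (TensorProduct.map d Δφ + TensorProduct.map d Δφ) := by
      simp only [LinearMap.comp_add]
      abel
    rw [e, char2_add_self (α.comp (TensorProduct.map Δφ d)),
      char2_add_self (TensorProduct.map d Δφ), add_zero, add_zero,
      ← TensorProduct.map_add_left, ← TensorProduct.map_add_right, hB]
  -- homotopy identity for h + K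
  have hKey : D3.comp (h + K) + (h + K).comp d
      = α.comp ((TensorProduct.map (Δ.comp (g.comp f)) LinearMap.id).comp Δ)
        + (TensorProduct.map LinearMap.id (Δ.comp (g.comp f))).comp Δ := by
    have hKd : K.comp d = (A.comp D2).comp Δ := by
      rw [hKdef, LinearMap.comp_assoc, ← hΔ, ← LinearMap.comp_assoc]
    have hDK : D3.comp K = (D3.comp A).comp Δ := by
      rw [hKdef, ← LinearMap.comp_assoc]
    have comb : D3.comp (h + K) + (h + K).comp d
        = (D3.comp h + h.comp d) + (D3.comp A + A.comp D2).comp Δ := by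
      rw [LinearMap.comp_add, LinearMap.add_comp, hKd, hDK, LinearMap.add_comp]
      abel
    rw [comb, hca, hAA]
    simp only [TensorProduct.map_add_left, TensorProduct.map_add_right,
      LinearMap.comp_add, LinearMap.add_comp]
    have e2 : α.comp ((TensorProduct.map Δ LinearMap.id).comp Δ)
          + (TensorProduct.map LinearMap.id Δ).comp Δ
          + ((α.comp (TensorProduct.map Δ LinearMap.id)).comp Δ
              + (α.comp (TensorProduct.map (Δ.comp (g.comp f)) LinearMap.id)).comp Δ
              + ((TensorProduct.map LinearMap.id Δ).comp Δ
                  + (TensorProduct.map LinearMap.id (Δ.comp (g.comp f))).comp Δ))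
        = (α.comp ((TensorProduct.map Δ LinearMap.id).comp Δ)
              + (α.comp (TensorProduct.map Δ LinearMap.id)).comp Δ)
          + ((TensorProduct.map LinearMap.id Δ).comp Δ
              + (TensorProduct.map LinearMap.id Δ).comp Δ)
          + ((α.comp (TensorProduct.map (Δ.comp (g.comp f)) LinearMap.id)).comp Δ
              + (TensorProduct.map LinearMap.id (Δ.comp (g.comp f))).comp Δ) := by
      rw [LinearMap.comp_assoc]
      abel
    rw [e2, LinearMap.comp_assoc,
      char2_add_self (α.comp ((TensorProduct.map Δ LinearMap.id).comp Δ)),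
      char2_add_self ((TensorProduct.map LinearMap.id Δ).comp Δ), zero_add, zero_add,
      LinearMap.comp_assoc]
  -- reduce the goal to hKey
  have e0 : D3'.comp (F.comp ((h + K).comp g)) + (F.comp ((h + K).comp g)).comp d'
      = F.comp ((D3.comp (h + K) + (h + K).comp d).comp g) := by
    have l1 : D3'.comp (F.comp ((h + K).comp g)) = F.comp ((D3.comp (h + K)).comp g) := by
      rw [← LinearMap.comp_assoc ((h + K).comp g) F D3', hcomm,
        LinearMap.comp_assoc ((h + K).comp g) D3 F, ← LinearMap.comp_assoc g (h + K) D3]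
    have l2 : (F.comp ((h + K).comp g)).comp d' = F.comp (((h + K).comp d).comp g) := by
      rw [LinearMap.comp_assoc d' ((h + K).comp g) F, LinearMap.comp_assoc d' g (h + K),
        ← hg, ← LinearMap.comp_assoc g d (h + K)]
    rw [l1, l2, ← LinearMap.comp_add, ← LinearMap.add_comp]
  rw [e0, hKey]
  -- compute the two remaining terms
  have hΔ'f : (TensorProduct.map f f).comp (Δ.comp (g.comp f)) = Δ'.comp f := by
    rw [hΔ', LinearMap.comp_assoc, LinearMap.comp_assoc]
  have term1 : F.comp ((α.comp ((TensorProduct.map (Δ.comp (g.comp f)) LinearMap.id).comp Δ)).comp g)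
      = α'.comp ((TensorProduct.map Δ' LinearMap.id).comp Δ') := by
    have hFα : F.comp α = α'.comp (TensorProduct.map (TensorProduct.map f f) f) := by
      rw [hF, hα, hα', TensorProduct.map_map_comp_assoc_eq]
    have hm : (TensorProduct.map (TensorProduct.map f f) f).comp
          (TensorProduct.map (Δ.comp (g.comp f)) LinearMap.id)
        = (TensorProduct.map Δ' LinearMap.id).comp (TensorProduct.map f f) := by
      rw [← TensorProduct.map_comp, hΔ'f, ← TensorProduct.map_comp, LinearMap.comp_id,
        LinearMap.id_comp]
    calc F.comp ((α.comp ((TensorProduct.map (Δ.comp (g.comp f)) LinearMap.id).comp Δ)).comp g)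
        = ((((F.comp α).comp (TensorProduct.map (Δ.comp (g.comp f)) LinearMap.id)).comp Δ).comp g) := by
          simp only [LinearMap.comp_assoc]
      _ = (((α'.comp (TensorProduct.map (TensorProduct.map f f) f)).comp
            (TensorProduct.map (Δ.comp (g.comp f)) LinearMap.id)).comp Δ).comp g := by rw [hFα]
      _ = ((α'.comp ((TensorProduct.map Δ' LinearMap.id).comp (TensorProduct.map f f))).comp Δ).comp g := by
          rw [LinearMap.comp_assoc (TensorProduct.map (Δ.comp (g.comp f)) LinearMap.id)
            (TensorProduct.map (TensorProduct.map f f) f) α', hm]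
      _ = α'.comp ((TensorProduct.map Δ' LinearMap.id).comp ((TensorProduct.map f f).comp (Δ.comp g))) := by
          simp only [LinearMap.comp_assoc]
      _ = α'.comp ((TensorProduct.map Δ' LinearMap.id).comp Δ') := by rw [← hΔ']
  have term2 : F.comp (((TensorProduct.map LinearMap.id (Δ.comp (g.comp f))).comp Δ).comp g)
      = (TensorProduct.map LinearMap.id Δ').comp Δ' := by
    have hm2 : F.comp (TensorProduct.map LinearMap.id (Δ.comp (g.comp f)))
        = (TensorProduct.map LinearMap.id Δ').comp (TensorProduct.map f f) := by
      rw [hF, ← TensorProduct.map_comp, hΔ'f, ← TensorProduct.map_comp, LinearMap.comp_id,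
        LinearMap.id_comp]
    calc F.comp (((TensorProduct.map LinearMap.id (Δ.comp (g.comp f))).comp Δ).comp g)
        = ((F.comp (TensorProduct.map LinearMap.id (Δ.comp (g.comp f)))).comp Δ).comp g := by
          simp only [LinearMap.comp_assoc]
      _ = (((TensorProduct.map LinearMap.id Δ').comp (TensorProduct.map f f)).comp Δ).comp g := by
          rw [hm2]
      _ = (TensorProduct.map LinearMap.id Δ').comp ((TensorProduct.map f f).comp (Δ.comp g)) := by
          simp only [LinearMap.comp_assoc]
      _ = (TensorProduct.map LinearMap.id Δ').comp Δ' := by rw [← hΔ']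
  rw [LinearMap.add_comp, LinearMap.comp_add, term1, term2]
end

section
/- Let (f,g,φ,(X,∂),(X',∂')) be a chain contraction of chain complexes over ℤ/2 and let Δ: C_*(X) → C_*(X)⊗C_*(X) and Δ' = (f⊗f)∘Δ∘g be coproducts. For cocycles u ∈ C^p(X'), v ∈ C^q(X'), define cup products via the coproducts: (u ⌣' v)(c') = m∘(u⊗v)∘Δ'(c') on C_*(X') and ((u f) ⌣ (v f))(c) = m∘(uf ⊗ vf)∘Δ(c) on C_*(X). Then the pullback f* : H*(X') → H*(X) satisfies f*([u] ⌣' [v]) = f*[u] ⌣ f*[v], i.e., f* is multiplicative for these cup products. -/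
open TensorProduct

/-- let (f,g,φ) be a chain contraction of (X,∂) to (X',∂') over ℤ/2,
Δ : C_*(X) → C_*(X)⊗C_*(X) a coproduct (chain map), Δ' = (f⊗f)∘Δ∘g the induced
coproduct.  For cocycles u ∈ C^p(X'), v ∈ C^q(X'), the cup products are
(u ⌣' v) = m∘(u⊗v)∘Δ' and (uf ⌣ vf) = m∘(uf⊗vf)∘Δ.  Then the pullback
f* : H*(X') → H*(X), f*[w] = [w∘f], is multiplicative: f*([u]⌣'[v]) = f*[u]⌣f*[v],
i.e. the cocycles (u⌣'v)∘f and (u∘f)⌣(v∘f) differ by a coboundary (an element of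
the range of δ = ∂* on the dual cochain complex). -/
theorem stmt15
    {C C' : Type*}
    [AddCommGroup C] [Module (ZMod 2) C]
    [AddCommGroup C'] [Module (ZMod 2) C']
    (d : C →ₗ[ZMod 2] C) (d' : C' →ₗ[ZMod 2] C')
    (hdd : d.comp d = 0) (hdd' : d'.comp d' = 0)
    (f : C →ₗ[ZMod 2] C') (g : C' →ₗ[ZMod 2] C)
    (hf : d'.comp f = f.comp d) (hg : d.comp g = g.comp d')
    (φ : C →ₗ[ZMod 2] C)
    (hfg : f.comp g = LinearMap.id)
    (hφ : d.comp φ + φ.comp d = LinearMap.id + g.comp f)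
    (Δ : C →ₗ[ZMod 2] C ⊗[ZMod 2] C)
    (hΔ : (TensorProduct.map d LinearMap.id + TensorProduct.map LinearMap.id d).comp Δ
        = Δ.comp d)
    (u v : Module.Dual (ZMod 2) C')
    (hu : d'.dualMap u = 0) (hv : d'.dualMap v = 0) :
    (((LinearMap.mul' (ZMod 2) (ZMod 2)).comp (TensorProduct.map u v)).comp
        ((TensorProduct.map f f).comp (Δ.comp g))).comp f
      - ((LinearMap.mul' (ZMod 2) (ZMod 2)).comp
          (TensorProduct.map (u.comp f) (v.comp f))).comp Δ
      ∈ LinearMap.range d.dualMap := by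
  classical
  set m := LinearMap.mul' (ZMod 2) (ZMod 2) with hm
  set α := ((m.comp (TensorProduct.map (u.comp f) (v.comp f)))).comp Δ with hα
  have hud : (u.comp f).comp d = 0 := by
    rw [LinearMap.comp_assoc, ← hf, ← LinearMap.comp_assoc]
    have h0 : u.comp d' = 0 := hu
    rw [h0, LinearMap.zero_comp]
  have hvd : (v.comp f).comp d = 0 := by
    rw [LinearMap.comp_assoc, ← hf, ← LinearMap.comp_assoc]
    have h0 : v.comp d' = 0 := hv
    rw [h0, LinearMap.zero_comp]
  have hαd : α.comp d = 0 := by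
    have h1 : (TensorProduct.map (u.comp f) (v.comp f)).comp
        (TensorProduct.map d LinearMap.id + TensorProduct.map LinearMap.id d) = 0 := by
      rw [LinearMap.comp_add, ← TensorProduct.map_comp, ← TensorProduct.map_comp,
        hud, hvd]
      simp [TensorProduct.map_zero_left, TensorProduct.map_zero_right]
    rw [hα, LinearMap.comp_assoc, LinearMap.comp_assoc, ← hΔ,
      ← LinearMap.comp_assoc Δ, ← LinearMap.comp_assoc, h1,
      LinearMap.comp_zero, LinearMap.zero_comp]
  refine ⟨α.comp φ, ?_⟩
  have hLHS : (((m.comp (TensorProduct.map u v)).comp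
        ((TensorProduct.map f f).comp (Δ.comp g))).comp f) = (α.comp g).comp f := by
    rw [hα, TensorProduct.map_comp]
    simp only [LinearMap.comp_assoc]
  rw [hLHS]
  ext c
  have key := LinearMap.congr_fun hφ c
  simp only [LinearMap.add_apply, LinearMap.comp_apply, LinearMap.id_apply] at key
  have h0 : α (d (φ c)) = 0 := LinearMap.congr_fun hαd (φ c)
  have := congrArg α key
  simp only [map_add, h0, zero_add] at this
  simp only [LinearMap.dualMap_apply', LinearMap.sub_apply, LinearMap.comp_apply, this]
  rw [CharTwo.sub_eq_add, add_comm]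
end
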